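/- Let α > −1, 1 < p ≤ 2, 0 < δ < 1, and set w(z) = |z|^{(α+2)(p−1)(1−δ)} on the upper half plane. Then w belongs to the Bekollé class B_{p,α}, with B_{p,α}(w) ≤ C_{α,p} δ^{1−p} for a constant C_{α,p} depending only on α and p. -/

import Mathlib

open MeasureTheory ENNReal

noncomputable section

/-- The upper half plane. -/
def UHP : Set ℂ := {z | 0 < z.im}

/-- The measure `dA_α = (Im z)^α dA` on the upper half plane. -/
def measA (α : ℝ) : Measure ℂ :=
  (volume.restrict UHP).withDensity fun z => ENNReal.ofReal (z.im ^ α)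

/-- The Carleson box `Q_{[a,b)} = [a,b) × (0, b-a]`. -/
def cbox (a b : ℝ) : Set ℂ := {z | a ≤ z.re ∧ z.re < b ∧ 0 < z.im ∧ z.im ≤ b - a}

/-!
Write `t = (α + 2)(1 - δ)`, so that `w = |z| ^ (t (p - 1))` and `w ^ (1 - p') = |z| ^ (-t)`.
For `z` in the box, `m ≤ |Re z| ≤ m + (b - a)` with `m = max a (-b)`. If `b - a ≤ m`, then
`m ≤ |z| ≤ 3m` on the box and the quotient is at most `3 ^ (t (p - 1))`. Otherwise the box lies in
`(-2(b - a), 2(b - a)) × (0, b - a]`, where `|z| ≥ max |x| y`. Integrating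
`y ^ α max(|x|, y) ^ (-t)` below the diagonal `y ≤ |x|` with `x` outermost, and above it with `y`
outermost, bounds the `|z| ^ (-t)`-mass of the box by a constant times
`(b - a) ^ (α + 2 - t) / (α + 2 - t)`, while `|Q|_α = (b - a) ^ (α + 2) / (α + 1)`.
Since `α + 2 - t = (α + 2) δ`, this gives the factor `δ ^ (1 - p)`.
-/

open Set

lemma setLAverage_le_of_forall_le {X : Type*} [MeasurableSpace X] {μ : Measure X} {s : Set X}
    {f : X → ℝ≥0∞} {c : ℝ≥0∞} (h : ∀ x ∈ s, f x ≤ c) : ⨍⁻ x in s, f x ∂μ ≤ c := by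
  rw [setLAverage_eq]
  refine ENNReal.div_le_of_le_mul ?_
  calc ∫⁻ x in s, f x ∂μ ≤ ∫⁻ _ in s, c ∂μ := setLIntegral_mono measurable_const h
    _ = c * μ s := setLIntegral_const s c

lemma mul_rpow_le_ofReal_mul_rpow {x y : ℝ≥0∞} {A B q : ℝ} (hB : 0 ≤ B) (hq : 0 ≤ q)
    (hx : x ≤ ENNReal.ofReal A) (hy : y ≤ ENNReal.ofReal B) :
    x * y ^ q ≤ ENNReal.ofReal (A * B ^ q) := by
  rw [ENNReal.ofReal_mul' (Real.rpow_nonneg hB q), ← ENNReal.ofReal_rpow_of_nonneg hB hq]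
  exact mul_le_mul' hx (ENNReal.rpow_le_rpow hy hq)

lemma lintegral_Ioc_rpow {c T : ℝ} (hc : -1 < c) (hT : 0 ≤ T) :
    ∫⁻ y in Ioc 0 T, ENNReal.ofReal (y ^ c) = ENNReal.ofReal (T ^ (c + 1) / (c + 1)) := by
  have hc1 : c + 1 ≠ 0 := by linarith
  rw [← ofReal_integral_eq_lintegral_ofReal (intervalIntegral.intervalIntegrable_rpow' hc).1
      ((ae_restrict_mem measurableSet_Ioc).mono fun y hy => Real.rpow_nonneg hy.1.le c),
    ← intervalIntegral.integral_of_le hT, integral_rpow (Or.inl hc), Real.zero_rpow hc1,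
    sub_zero]

lemma lintegral_Ioo_comp_abs_le (g : ℝ → ℝ≥0∞) (R : ℝ) :
    ∫⁻ x in Ioo (-R) R, g |x| ≤ 2 * ∫⁻ x in Ioc 0 R, g x := by
  have hneg : ∫⁻ x in Ioc (-R) 0, g |x| = ∫⁻ x in Ioc 0 R, g x := by
    rw [← (Measure.measurePreserving_neg volume).setLIntegral_comp_preimage_emb
      (MeasurableEquiv.neg ℝ).measurableEmbedding, neg_preimage, neg_Ioc, neg_zero, neg_neg,
      restrict_Ico_eq_restrict_Ioc]
    exact setLIntegral_congr_fun measurableSet_Ioc fun x hx => by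
      simp [abs_of_pos hx.1]
  have hpos : ∫⁻ x in Ioc 0 R, g |x| = ∫⁻ x in Ioc 0 R, g x :=
    setLIntegral_congr_fun measurableSet_Ioc fun x hx => by rw [abs_of_pos hx.1]
  calc ∫⁻ x in Ioo (-R) R, g |x|
      ≤ ∫⁻ x in Ioc (-R) 0 ∪ Ioc 0 R, g |x| :=
        lintegral_mono_set fun x hx => by
          rcases le_or_gt x 0 with h | h
          exacts [Or.inl ⟨hx.1, h⟩, Or.inr ⟨h, hx.2.le⟩]
    _ ≤ (∫⁻ x in Ioc (-R) 0, g |x|) + ∫⁻ x in Ioc 0 R, g |x| := lintegral_union_le _ _ _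
    _ = 2 * ∫⁻ x in Ioc 0 R, g x := by rw [hneg, hpos, two_mul]

lemma max_le_abs_re_of_mem_cbox {a b : ℝ} {z : ℂ} (hz : z ∈ cbox a b) :
    max a (-b) ≤ |z.re| :=
  max_le (hz.1.trans (le_abs_self _)) ((neg_lt_neg hz.2.1).le.trans (neg_le_abs _))

lemma max_le_norm_of_mem_cbox {a b : ℝ} {z : ℂ} (hz : z ∈ cbox a b) : max a (-b) ≤ ‖z‖ :=
  (max_le_abs_re_of_mem_cbox hz).trans (Complex.abs_re_le_norm z)

lemma norm_le_of_mem_cbox {a b : ℝ} {z : ℂ} (hz : z ∈ cbox a b) :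
    ‖z‖ ≤ max a (-b) + 2 * (b - a) := by
  obtain ⟨hre₁, hre₂, him₁, him₂⟩ := hz
  have hre : |z.re| ≤ max a (-b) + (b - a) :=
    abs_le.2 ⟨by linarith [le_max_right a (-b)], by linarith [le_max_left a (-b)]⟩
  calc ‖z‖ ≤ |z.re| + |z.im| := Complex.norm_le_abs_re_add_abs_im z
    _ ≤ max a (-b) + 2 * (b - a) := by rw [abs_of_pos him₁]; linarith

lemma lt_of_max_neg_lt_sub {a b : ℝ} (h : max a (-b) < b - a) : a < b := by
  linarith [le_max_left a (-b), le_max_right a (-b)]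

lemma measurableSet_cbox (a b : ℝ) : MeasurableSet (cbox a b) := by
  simp only [cbox, ofPred_and]
  measurability

lemma setLIntegral_cbox_measA (α a b : ℝ) {f : ℂ → ℝ≥0∞} (hf : Measurable f) :
    ∫⁻ z in cbox a b, f z ∂measA α =
      ∫⁻ p in Ico a b ×ˢ Ioc 0 (b - a), ENNReal.ofReal (p.2 ^ α) * f ⟨p.1, p.2⟩
        ∂(volume.prod volume) := by
  have hcbox : cbox a b ⊆ UHP := fun _ hz => hz.2.2.1
  rw [measA, restrict_withDensity (measurableSet_cbox a b),
    Measure.restrict_restrict (measurableSet_cbox a b), inter_eq_self_of_subset_left hcbox,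
    lintegral_withDensity_eq_lintegral_mul _ (by fun_prop) hf, ← Measure.volume_eq_prod,
    ← (Complex.volume_preserving_equiv_real_prod.symm).setLIntegral_comp_preimage_emb
      Complex.measurableEquivRealProd.symm.measurableEmbedding]
  congr 2
  ext p
  simp [cbox, Complex.measurableEquivRealProd_symm_apply, and_assoc]

lemma measA_cbox {α a b : ℝ} (hα : -1 < α) (hab : a ≤ b) :
    measA α (cbox a b) = ENNReal.ofReal ((b - a) ^ (α + 2) / (α + 1)) := by
  rw [← setLIntegral_one, setLIntegral_cbox_measA α a b measurable_const,
    setLIntegral_prod _ (by fun_prop)]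
  simp only [mul_one]
  have hL : 0 ≤ b - a := sub_nonneg.2 hab
  have hα1 : 0 < α + 1 := by linarith
  rw [lintegral_Ioc_rpow hα hL, setLIntegral_const, Real.volume_Ico,
    ← ENNReal.ofReal_mul (by positivity)]
  have hpow : (b - a) ^ (α + 2) = (b - a) ^ (α + 1) * (b - a) := by
    rw [← Real.rpow_add_one' hL (by linarith)]; ring_nf
  rw [hpow]; ring_nf

lemma lintegral_Ioi_indicator_below_diagonal_le {α t : ℝ} (hα : -1 < α) (x : ℝ) :
    ∫⁻ y in Ioi 0, {p : ℝ × ℝ | p.2 ≤ |p.1|}.indicator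
        (fun p => ENNReal.ofReal (p.2 ^ α * max |p.1| p.2 ^ (-t))) (x, y)
      ≤ ENNReal.ofReal (|x| ^ (α + 1 - t) / (α + 1)) := by
  rcases eq_or_ne x 0 with rfl | hx
  · refine le_of_eq_of_le (setLIntegral_eq_zero measurableSet_Ioi fun y hy => ?_) zero_le
    simp [not_le.2 (mem_Ioi.1 hy)]
  have hx : 0 < |x| := abs_pos.2 hx
  have hslice : ∀ y ∈ Ioi (0 : ℝ), {p : ℝ × ℝ | p.2 ≤ |p.1|}.indicator
      (fun p => ENNReal.ofReal (p.2 ^ α * max |p.1| p.2 ^ (-t))) (x, y)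
        = (Iic |x|).indicator
            (fun y => ENNReal.ofReal (y ^ α) * ENNReal.ofReal (|x| ^ (-t))) y := by
    intro y hy
    by_cases h : y ≤ |x|
    · simp [h, ENNReal.ofReal_mul (Real.rpow_nonneg (le_of_lt hy) α)]
    · simp [h]
  rw [setLIntegral_congr_fun measurableSet_Ioi hslice, lintegral_indicator measurableSet_Iic,
    Measure.restrict_restrict measurableSet_Iic, Iic_inter_Ioi,
    lintegral_mul_const' _ _ ofReal_ne_top, lintegral_Ioc_rpow hα hx.le,
    ← ENNReal.ofReal_mul (div_nonneg (Real.rpow_nonneg hx.le _) (by linarith))]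
  refine ENNReal.ofReal_le_ofReal (le_of_eq ?_)
  rw [sub_eq_add_neg, Real.rpow_add hx (α + 1) (-t)]
  ring

lemma lintegral_below_diagonal_le {α t R : ℝ} (hα : -1 < α) (ht : t < α + 2) (hR : 0 ≤ R) :
    ∫⁻ p in Ioo (-R) R ×ˢ Ioi 0, {p : ℝ × ℝ | p.2 ≤ |p.1|}.indicator
        (fun p => ENNReal.ofReal (p.2 ^ α * max |p.1| p.2 ^ (-t))) p ∂(volume.prod volume)
      ≤ ENNReal.ofReal (2 * R ^ (α + 2 - t) / ((α + 1) * (α + 2 - t))) := by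
  have hS : MeasurableSet {p : ℝ × ℝ | p.2 ≤ |p.1|} :=
    measurableSet_le measurable_snd measurable_fst.abs
  have hα1 : 0 < α + 1 := by linarith
  rw [setLIntegral_prod _ ((Measurable.indicator (by fun_prop) hS).aemeasurable)]
  calc ∫⁻ x in Ioo (-R) R, ∫⁻ y in Ioi 0, {p : ℝ × ℝ | p.2 ≤ |p.1|}.indicator
          (fun p => ENNReal.ofReal (p.2 ^ α * max |p.1| p.2 ^ (-t))) (x, y)
      ≤ ∫⁻ x in Ioo (-R) R, ENNReal.ofReal (|x| ^ (α + 1 - t)) * ENNReal.ofReal (α + 1)⁻¹ :=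
        lintegral_mono fun x => (lintegral_Ioi_indicator_below_diagonal_le hα x).trans_eq
          (by rw [div_eq_mul_inv, ENNReal.ofReal_mul (Real.rpow_nonneg (abs_nonneg x) _)])
    _ ≤ (2 * ∫⁻ x in Ioc 0 R, ENNReal.ofReal (x ^ (α + 1 - t))) * ENNReal.ofReal (α + 1)⁻¹ := by
        rw [lintegral_mul_const' _ _ ofReal_ne_top]
        gcongr
        exact lintegral_Ioo_comp_abs_le (fun x => ENNReal.ofReal (x ^ (α + 1 - t))) R
    _ = ENNReal.ofReal (2 * R ^ (α + 2 - t) / ((α + 1) * (α + 2 - t))) := by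
        rw [lintegral_Ioc_rpow (by linarith) hR, show α + 1 - t + 1 = α + 2 - t by ring,
          ← ENNReal.ofReal_ofNat 2, ← ENNReal.ofReal_mul zero_le_two,
          ← ENNReal.ofReal_mul
            (mul_nonneg zero_le_two (div_nonneg (Real.rpow_nonneg hR _) (by linarith)))]
        congr 1
        field_simp

lemma lintegral_above_diagonal_le {α t L : ℝ} (ht : t < α + 2) (hL : 0 ≤ L) (s : Set ℝ) :
    ∫⁻ p in s ×ˢ Ioc 0 L, {p : ℝ × ℝ | p.2 ≤ |p.1|}ᶜ.indicator
        (fun p => ENNReal.ofReal (p.2 ^ α * max |p.1| p.2 ^ (-t))) p ∂(volume.prod volume)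
      ≤ ENNReal.ofReal (2 * L ^ (α + 2 - t) / (α + 2 - t)) := by
  have hS : MeasurableSet {p : ℝ × ℝ | p.2 ≤ |p.1|} :=
    measurableSet_le measurable_snd measurable_fst.abs
  have hslice : ∀ y ∈ Ioc 0 L, ∫⁻ x in s, {p : ℝ × ℝ | p.2 ≤ |p.1|}ᶜ.indicator
      (fun p => ENNReal.ofReal (p.2 ^ α * max |p.1| p.2 ^ (-t))) (x, y)
        ≤ ENNReal.ofReal (2 * y ^ (α + 1 - t)) := by
    intro y hy
    calc _ ≤ ∫⁻ x, (Ioo (-y) y).indicator (fun _ => ENNReal.ofReal (y ^ (α - t))) x :=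
          (setLIntegral_le_lintegral _ _).trans (lintegral_mono fun x => by
            by_cases h : |x| < y
            · have hx : x ∈ Ioo (-y) y := abs_lt.1 h
              simp [h, hx, max_eq_right h.le, ← Real.rpow_add hy.1, sub_eq_add_neg]
            · simp [not_lt.1 h])
      _ = ENNReal.ofReal (2 * y ^ (α + 1 - t)) := by
        rw [lintegral_indicator_const measurableSet_Ioo, Real.volume_Ioo,
          ← ENNReal.ofReal_mul (Real.rpow_nonneg hy.1.le _)]
        congr 1
        rw [show α + 1 - t = α - t + 1 by ring, Real.rpow_add_one hy.1.ne']
        ring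
  rw [setLIntegral_prod_symm _ ((Measurable.indicator (by fun_prop) hS.compl).aemeasurable)]
  calc _ ≤ ∫⁻ y in Ioc 0 L, ENNReal.ofReal 2 * ENNReal.ofReal (y ^ (α + 1 - t)) :=
        setLIntegral_mono' measurableSet_Ioc fun y hy =>
          (hslice y hy).trans_eq (ENNReal.ofReal_mul zero_le_two)
    _ = ENNReal.ofReal (2 * L ^ (α + 2 - t) / (α + 2 - t)) := by
        rw [lintegral_const_mul' _ _ ofReal_ne_top, lintegral_Ioc_rpow (by linarith) hL,
          show α + 1 - t + 1 = α + 2 - t by ring, ← ENNReal.ofReal_mul zero_le_two, mul_div_assoc]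

lemma lintegral_max_abs_rpow_neg_le {α t R L : ℝ} (hα : -1 < α) (ht : t < α + 2) (hR : 0 ≤ R)
    (hL : 0 ≤ L) :
    ∫⁻ p in Ioo (-R) R ×ˢ Ioc 0 L, ENNReal.ofReal (p.2 ^ α * max |p.1| p.2 ^ (-t))
        ∂(volume.prod volume)
      ≤ ENNReal.ofReal (2 * R ^ (α + 2 - t) / ((α + 1) * (α + 2 - t)) +
          2 * L ^ (α + 2 - t) / (α + 2 - t)) := by
  set S := {p : ℝ × ℝ | p.2 ≤ |p.1|}
  set F := fun p : ℝ × ℝ => ENNReal.ofReal (p.2 ^ α * max |p.1| p.2 ^ (-t))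
  have hS : MeasurableSet S := measurableSet_le measurable_snd measurable_fst.abs
  have hF : Measurable F := by fun_prop
  have he : 0 < α + 2 - t := by linarith
  calc ∫⁻ p in Ioo (-R) R ×ˢ Ioc 0 L, F p ∂(volume.prod volume)
      = (∫⁻ p in Ioo (-R) R ×ˢ Ioc 0 L, S.indicator F p ∂(volume.prod volume)) +
          ∫⁻ p in Ioo (-R) R ×ˢ Ioc 0 L, Sᶜ.indicator F p ∂(volume.prod volume) := by
        rw [← lintegral_add_left (hF.indicator hS)]
        exact lintegral_congr fun p => (S.indicator_self_add_compl_apply F p).symm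
    _ ≤ (∫⁻ p in Ioo (-R) R ×ˢ Ioi 0, S.indicator F p ∂(volume.prod volume)) +
          ∫⁻ p in Ioo (-R) R ×ˢ Ioc 0 L, Sᶜ.indicator F p ∂(volume.prod volume) := by
        gcongr ?_ + _
        exact lintegral_mono_set (prod_mono subset_rfl Ioc_subset_Ioi_self)
    _ ≤ _ := add_le_add (lintegral_below_diagonal_le hα ht hR) (lintegral_above_diagonal_le ht hL _)
    _ = _ := (ENNReal.ofReal_add
          (div_nonneg (mul_nonneg zero_le_two (Real.rpow_nonneg hR _)) (by nlinarith))
          (div_nonneg (mul_nonneg zero_le_two (Real.rpow_nonneg hL _)) he.le)).symm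

lemma lintegral_cbox_norm_rpow_neg_le {α t a b : ℝ} (hα : -1 < α) (ht₀ : 0 ≤ t) (ht : t < α + 2)
    (hnear : max a (-b) < b - a) :
    ∫⁻ z in cbox a b, ENNReal.ofReal (‖z‖ ^ (-t)) ∂measA α
      ≤ ENNReal.ofReal (2 * (2 * (b - a)) ^ (α + 2 - t) / ((α + 1) * (α + 2 - t)) +
          2 * (b - a) ^ (α + 2 - t) / (α + 2 - t)) := by
  have hL : 0 ≤ b - a := sub_nonneg.2 (lt_of_max_neg_lt_sub hnear).le
  have hbox : Ico a b ⊆ Ioo (-(2 * (b - a))) (2 * (b - a)) := fun x hx =>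
    ⟨by linarith [hx.1, le_max_right a (-b)], by linarith [hx.2, le_max_left a (-b)]⟩
  rw [setLIntegral_cbox_measA α a b (by fun_prop)]
  refine le_trans (setLIntegral_mono' (measurableSet_Ico.prod measurableSet_Ioc) fun p hp => ?_)
    ((lintegral_mono_set (prod_mono hbox subset_rfl)).trans
      (lintegral_max_abs_rpow_neg_le hα ht (by linarith) hL))
  obtain ⟨x, y⟩ := p
  have hy : 0 < y := hp.2.1
  have hmax : max |x| y ≤ ‖(⟨x, y⟩ : ℂ)‖ :=
    max_le (Complex.abs_re_le_norm ⟨x, y⟩) ((le_abs_self y).trans (Complex.abs_im_le_norm ⟨x, y⟩))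
  rw [← ENNReal.ofReal_mul (Real.rpow_nonneg hy.le _)]
  exact ENNReal.ofReal_le_ofReal (mul_le_mul_of_nonneg_left
    (Real.rpow_le_rpow_of_nonpos (lt_max_of_lt_right hy) hmax (neg_nonpos.2 ht₀))
    (Real.rpow_nonneg hy.le _))

lemma setLAverage_cbox_norm_rpow_neg_le {α t a b : ℝ} (hα : -1 < α) (ht₀ : 0 ≤ t)
    (ht : t < α + 2) (hnear : max a (-b) < b - a) :
    ⨍⁻ z in cbox a b, ENNReal.ofReal (‖z‖ ^ (-t)) ∂measA α
      ≤ ENNReal.ofReal ((2 ^ (α + 3) + 2 * (α + 1)) / (α + 2 - t) * (b - a) ^ (-t)) := by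
  set L := b - a
  set e := α + 2 - t
  have hab : a < b := lt_of_max_neg_lt_sub hnear
  have hL : 0 < L := sub_pos.2 hab
  have he : 0 < e := by linarith
  have hα1 : 0 < α + 1 := by linarith
  have h2e : 2 * 2 ^ e ≤ (2 : ℝ) ^ (α + 3) := by
    rw [← Real.rpow_one_add' zero_le_two (by linarith)]
    exact Real.rpow_le_rpow_of_exponent_le one_le_two (by linarith)
  have hLe : L ^ (-t) * L ^ (α + 2) = L ^ e := by
    rw [← Real.rpow_add hL]; congr 1; ring
  rw [setLAverage_eq, measA_cbox hα hab.le]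
  refine ENNReal.div_le_of_le_mul
    ((lintegral_cbox_norm_rpow_neg_le hα ht₀ ht hnear).trans ?_)
  rw [← ENNReal.ofReal_mul (by positivity)]
  refine ENNReal.ofReal_le_ofReal ?_
  have hX : 0 ≤ L ^ e / ((α + 1) * e) := by positivity
  calc 2 * (2 * L) ^ e / ((α + 1) * e) + 2 * L ^ e / e
      = (2 * 2 ^ e + 2 * (α + 1)) * (L ^ e / ((α + 1) * e)) := by
        rw [Real.mul_rpow zero_le_two hL.le]; field_simp
    _ ≤ (2 ^ (α + 3) + 2 * (α + 1)) * (L ^ e / ((α + 1) * e)) := by gcongr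
    _ = (2 ^ (α + 3) + 2 * (α + 1)) / e * L ^ (-t) * (L ^ (α + 2) / (α + 1)) := by
        rw [← hLe]; field_simp

/-- With `q = p - 1` this is the `B_{p,α}` quotient of the weight `|z| ^ (t * q)` on the box
`cbox a b`, since `(t * q) * (1 - p') = -t`. -/
def powerWeightBoxQuotient (μ : Measure ℂ) (a b t q : ℝ) : ℝ≥0∞ :=
  (⨍⁻ z in cbox a b, ENNReal.ofReal (‖z‖ ^ (t * q)) ∂μ) *
    (⨍⁻ z in cbox a b, ENNReal.ofReal (‖z‖ ^ (-t)) ∂μ) ^ q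

lemma powerWeightBoxQuotient_le_of_far (μ : Measure ℂ) {a b t q : ℝ} (ht : 0 ≤ t) (hq : 0 < q)
    (hab : a < b) (hfar : b - a ≤ max a (-b)) :
    powerWeightBoxQuotient μ a b t q ≤ ENNReal.ofReal (3 ^ (t * q)) := by
  set m := max a (-b)
  have hm : 0 < m := by linarith
  have hupper : ∀ z ∈ cbox a b,
      ENNReal.ofReal (‖z‖ ^ (t * q)) ≤ ENNReal.ofReal ((3 * m) ^ (t * q)) :=
    fun z hz => ENNReal.ofReal_le_ofReal (Real.rpow_le_rpow (norm_nonneg z)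
      (by linarith [norm_le_of_mem_cbox hz]) (by positivity))
  have hlower : ∀ z ∈ cbox a b, ENNReal.ofReal (‖z‖ ^ (-t)) ≤ ENNReal.ofReal (m ^ (-t)) :=
    fun z hz => ENNReal.ofReal_le_ofReal
      (Real.rpow_le_rpow_of_nonpos hm (max_le_norm_of_mem_cbox hz) (neg_nonpos.2 ht))
  refine (mul_rpow_le_ofReal_mul_rpow (Real.rpow_nonneg hm.le _) hq.le
    (setLAverage_le_of_forall_le hupper) (setLAverage_le_of_forall_le hlower)).trans_eq ?_
  rw [Real.mul_rpow zero_le_three hm.le, ← Real.rpow_mul hm.le, mul_assoc,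
    ← Real.rpow_add hm, neg_mul, add_neg_cancel, Real.rpow_zero, mul_one]

lemma powerWeightBoxQuotient_le_of_near {α t q a b : ℝ} (hα : -1 < α) (ht₀ : 0 ≤ t)
    (ht : t < α + 2) (hq : 0 < q) (hnear : max a (-b) < b - a) :
    powerWeightBoxQuotient (measA α) a b t q
      ≤ ENNReal.ofReal (3 ^ (t * q) * ((2 ^ (α + 3) + 2 * (α + 1)) / (α + 2 - t)) ^ q) := by
  set L := b - a
  set c := (2 ^ (α + 3) + 2 * (α + 1)) / (α + 2 - t)
  have hL : 0 < L := sub_pos.2 (lt_of_max_neg_lt_sub hnear)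
  have hc : 0 ≤ c := div_nonneg (add_nonneg (by positivity) (by linarith)) (by linarith)
  have hupper : ∀ z ∈ cbox a b,
      ENNReal.ofReal (‖z‖ ^ (t * q)) ≤ ENNReal.ofReal ((3 * L) ^ (t * q)) :=
    fun z hz => ENNReal.ofReal_le_ofReal (Real.rpow_le_rpow (norm_nonneg z)
      (by linarith [norm_le_of_mem_cbox hz]) (by positivity))
  refine (mul_rpow_le_ofReal_mul_rpow (by positivity) hq.le (setLAverage_le_of_forall_le hupper)
    (setLAverage_cbox_norm_rpow_neg_le hα ht₀ ht hnear)).trans_eq ?_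
  rw [Real.mul_rpow zero_le_three hL.le, Real.mul_rpow hc (Real.rpow_nonneg hL.le _),
    ← Real.rpow_mul hL.le]
  congr 1
  rw [mul_mul_mul_comm, ← Real.rpow_add hL, neg_mul, add_neg_cancel, Real.rpow_zero, mul_one]

/-- for `1 < p ≤ 2` and `0 < δ < 1`, the weight
`w(z) = |z|^{(α+2)(p-1)(1-δ)}` lies in `B_{p,α}` with `B_{p,α}(w) ≤ C_{α,p} δ^{1-p}`:
for every interval `I = [a,b)`,
`(|Q_I|_{w,α}/|Q_I|_α)(|Q_I|_{w^{1-p'},α}/|Q_I|_α)^{p-1} ≤ C_{α,p} δ^{1-p}`. -/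
theorem power_weight_in_Bp (α p : ℝ) (hα : -1 < α) (hp1 : 1 < p) (hp2 : p ≤ 2) :
    ∃ C > 0, ∀ δ : ℝ, 0 < δ → δ < 1 → ∀ a b : ℝ, a < b →
      ((∫⁻ z in cbox a b,
            ENNReal.ofReal (‖z‖ ^ ((α + 2) * (p - 1) * (1 - δ))) ∂measA α) /
          measA α (cbox a b)) *
        (((∫⁻ z in cbox a b,
            ENNReal.ofReal
              (‖z‖ ^ ((α + 2) * (p - 1) * (1 - δ) * (1 - p / (p - 1)))) ∂measA α) /
          measA α (cbox a b)) ^ (p - 1)) ≤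
        ENNReal.ofReal (C * δ ^ (1 - p)) := by
  have hα2 : 0 < α + 2 := by linarith
  have hq : 0 < p - 1 := by linarith
  set K := ((2 ^ (α + 3) + 2 * (α + 1)) / (α + 2)) ^ (p - 1)
  have hK : 0 ≤ K :=
    Real.rpow_nonneg (div_nonneg (add_nonneg (by positivity) (by linarith)) hα2.le) _
  refine ⟨3 ^ (α + 2) * (1 + K), by positivity, fun δ hδ₀ hδ₁ a b hab => ?_⟩
  set t := (α + 2) * (1 - δ)
  have ht₀ : 0 ≤ t := mul_nonneg hα2.le (by linarith)
  have ht : t < α + 2 := by nlinarith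
  have hexp : (α + 2) * (p - 1) * (1 - δ) * (1 - p / (p - 1)) = -t := by
    field_simp; ring
  rw [hexp, show (α + 2) * (p - 1) * (1 - δ) = t * (p - 1) by ring, ← setLAverage_eq,
    ← setLAverage_eq]
  have h3 : (3 : ℝ) ^ (t * (p - 1)) ≤ 3 ^ (α + 2) :=
    Real.rpow_le_rpow_of_exponent_le (by norm_num) (by nlinarith)
  have hδ : 1 ≤ δ ^ (1 - p) := Real.one_le_rpow_of_pos_of_le_one_of_nonpos hδ₀ hδ₁.le (by linarith)
  rcases le_or_gt (b - a) (max a (-b)) with hfar | hnear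
  · refine (powerWeightBoxQuotient_le_of_far _ ht₀ hq hab hfar).trans (ENNReal.ofReal_le_ofReal ?_)
    calc (3 : ℝ) ^ (t * (p - 1)) ≤ 3 ^ (α + 2) * 1 * 1 := by rw [mul_one, mul_one]; exact h3
      _ ≤ 3 ^ (α + 2) * (1 + K) * δ ^ (1 - p) := by gcongr; linarith
  · refine (powerWeightBoxQuotient_le_of_near hα ht₀ ht hq hnear).trans
      (ENNReal.ofReal_le_ofReal ?_)
    have hsplit : ((2 ^ (α + 3) + 2 * (α + 1)) / (α + 2 - t)) ^ (p - 1) = K * δ ^ (1 - p) := by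
      rw [show α + 2 - t = (α + 2) * δ by ring, ← div_div, Real.div_rpow _ hδ₀.le,
        show 1 - p = -(p - 1) by ring, Real.rpow_neg hδ₀.le, div_eq_mul_inv]
      exact div_nonneg (add_nonneg (by positivity) (by linarith)) hα2.le
    rw [hsplit, ← mul_assoc]
    gcongr ?_ * _
    exact mul_le_mul h3 (by linarith) hK (by positivity)
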